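/- arXiv:math/0607544 — 2 statements merged into one kernel-verified Lean document; each statement's English description precedes it below -/
import Mathlib

section
/- Let G be a finite directed multigraph with edge set E, and suppose some edges are designated 'external' with the rest 'internal', where each external edge has exactly one endpoint among the vertices of G (its other end is free). For each vertex v let ρ(v) ∈ ℚ^E be the outgoing-minus-incoming edge vector, and for each connected component C of G let ρ(C) ∈ ℚ^E be the signed sum Σ ε_e · e over external edges e of C, with ε_e = +1 if e points out of C and −1 if it points into C. Let V_e ⊆ ℚ^E be the span of the external edge basis vectors and V_c ⊆ ℚ^E the span of {ρ(v) : v a vertex}. Then V_e ∩ V_c is spanned by {ρ(C) : C a connected component of G}. -/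
open scoped Classical

/-!
The `e`-coordinate of `∑ v, c v • ρ v` is `c (tail e) - c (head e)`, so such a vector lies in
`V_e` exactly when `c` is constant along internal edges, i.e. on connected components. Since the
internal edges of a component cancel, `ρ(C) = ∑_{v ∈ C} ρ(v)`, and regrouping the sum by
components writes a vector with componentwise constant `c` as `∑_C c(C) • ρ(C)`.
-/

open Submodule Relation

theorem Pi.mem_span_image_single_one_iff {ι R : Type*} [Finite ι] [DecidableEq ι] [Semiring R]
    {s : Set ι} {x : ι → R} :
    x ∈ span R ((fun i => Pi.single i (1 : R)) '' s) ↔ ∀ i ∉ s, x i = 0 := by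
  have hb : (fun i => Pi.single i (1 : R)) = Pi.basisFun R ι := by
    funext i; exact (Pi.basisFun_apply R ι i).symm
  rw [hb, Module.Basis.mem_span_image]
  simp only [Set.subset_def, Finset.mem_coe, Finsupp.mem_support_iff, Pi.basisFun_repr]
  exact forall_congr' fun i => not_imp_comm

noncomputable section

namespace OpenMultigraph

-- An edge `e` runs from `tail e` to `head e`; `none` stands for a free end.
variable {V E : Type*} (tail head : E → Option V)

def InternalAdj (u v : V) : Prop :=
  ∃ e, (tail e = some u ∧ head e = some v) ∨ (tail e = some v ∧ head e = some u)

instance : Std.Symm (InternalAdj tail head) := ⟨fun _ _ ⟨e, h⟩ => ⟨e, h.symm⟩⟩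

abbrev Reach : V → V → Prop := ReflTransGen (InternalAdj tail head)

def componentSetoid : Setoid V where
  r := Reach tail head
  iseqv := ⟨fun _ => .refl, fun h => symm h, .trans⟩

variable (R : Type*) [Ring R]

def relator (v : V) : E → R := fun e =>
  (if tail e = some v then 1 else 0) - (if head e = some v then 1 else 0)

def componentRelator (v₀ : V) : E → R := fun e =>
  (if head e = none ∧ ∃ u, tail e = some u ∧ Reach tail head u v₀ then 1 else 0) -
    (if tail e = none ∧ ∃ u, head e = some u ∧ Reach tail head u v₀ then 1 else 0)

variable {tail head R} [Fintype V]

theorem sum_smul_relator_apply (c : V → R) (e : E) :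
    (∑ v, c v • relator tail head R v) e = (tail e).elim 0 c - (head e).elim 0 c := by
  simp only [Finset.sum_apply, Pi.smul_apply, relator, smul_eq_mul, mul_sub, mul_ite, mul_one,
    mul_zero, Finset.sum_sub_distrib]
  rcases tail e with _ | a <;> rcases head e with _ | b <;> simp

theorem componentRelator_eq_sum (v₀ : V) :
    componentRelator tail head R v₀ =
      ∑ u with Reach tail head u v₀, relator tail head R u := by
  funext e
  have hreach : ∀ a b, tail e = some a → head e = some b →
      (Reach tail head a v₀ ↔ Reach tail head b v₀) :=
    fun a b ha hb => ⟨.head ⟨e, .inr ⟨ha, hb⟩⟩, .head ⟨e, .inl ⟨ha, hb⟩⟩⟩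
  simp only [componentRelator, relator, Finset.sum_apply, Finset.sum_sub_distrib]
  rcases ha : tail e with _ | a <;> rcases hb : head e with _ | b
  case some.some => simp [hreach a b ha hb]
  all_goals simp

theorem coeff_eq_of_reach {c : V → R}
    (hc : ∀ e, tail e ≠ none → head e ≠ none →
      (∑ v, c v • relator tail head R v) e = 0)
    {u v : V} (huv : Reach tail head u v) : c u = c v := by
  induction huv with
  | refl => rfl
  | tail _ hadj ih =>
    obtain ⟨e, hend⟩ := hadj
    have he := hc e
    rw [sum_smul_relator_apply] at he
    rw [ih]
    rcases hend with ⟨ht, hh⟩ | ⟨ht, hh⟩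
    · simpa [ht, hh, sub_eq_zero] using he
    · simpa [ht, hh, sub_eq_zero, eq_comm] using he

theorem sum_smul_relator_mem_span_componentRelator {c : V → R}
    (hc : ∀ u v, Reach tail head u v → c u = c v) :
    ∑ v, c v • relator tail head R v ∈ span R (Set.range (componentRelator tail head R)) := by
  let s := componentSetoid tail head
  have hfiber : ∀ q : Quotient s,
      ∑ v with ⟦v⟧ = q, c v • relator tail head R v =
        c q.out • componentRelator tail head R q.out := by
    intro q
    rw [componentRelator_eq_sum, Finset.smul_sum]
    refine Finset.sum_congr ?_ fun v hv => ?_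
    · exact Finset.filter_congr fun v _ => Quotient.mk_eq_iff_out
    · exact congrArg (· • _) (hc _ _ (Finset.mem_filter.mp hv).2)
  rw [← Finset.sum_fiberwise Finset.univ (fun v => (⟦v⟧ : Quotient s))]
  simp only [hfiber]
  exact sum_mem fun q _ => smul_mem _ _ (subset_span ⟨q.out, rfl⟩)

theorem span_external_inf_span_relator (R : Type*) [Ring R] [Fintype E] :
    span R ((fun e => Pi.single e (1 : R)) '' {e : E | tail e = none ∨ head e = none}) ⊓
        span R (Set.range (relator tail head R)) =
      span R (Set.range (componentRelator tail head R)) := by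
  apply le_antisymm
  · rintro x ⟨hext, hx⟩
    obtain ⟨c, rfl⟩ := (mem_span_range_iff_exists_fun R).mp hx
    rw [SetLike.mem_coe, Pi.mem_span_image_single_one_iff] at hext
    exact sum_smul_relator_mem_span_componentRelator fun u v =>
      coeff_eq_of_reach fun e h₁ h₂ => hext e (not_or.mpr ⟨h₁, h₂⟩)
  · rw [span_le]
    rintro _ ⟨v₀, rfl⟩
    refine ⟨Pi.mem_span_image_single_one_iff.mpr fun e he => ?_, ?_⟩
    · simp only [Set.mem_ofPred_eq, not_or] at he
      simp [componentRelator, he.1, he.2]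
    · rw [componentRelator_eq_sum]
      exact sum_mem fun u _ => subset_span ⟨u, rfl⟩

end OpenMultigraph

end

theorem stmt_6_general (V E : Type*) [Fintype V] [Fintype E]
    (tail head : E → Option V) :
    -- the outgoing-minus-incoming relator of a vertex
    let ρ : V → (E → ℚ) := fun v e =>
      (if tail e = some v then 1 else 0) - (if head e = some v then 1 else 0)
    -- reachability via internal edges
    let reach : V → V → Prop := fun u v => Relation.ReflTransGen
      (fun u v => ∃ e : E, (tail e = some u ∧ head e = some v) ∨
        (tail e = some v ∧ head e = some u)) u v
    -- the signed sum of external edges over the connected component of v₀: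
    -- +1 for edges pointing out of the component, −1 for edges pointing into it
    let ρC : V → (E → ℚ) := fun v₀ e =>
      (if head e = none ∧ ∃ u, tail e = some u ∧ reach u v₀ then 1 else 0)
        - (if tail e = none ∧ ∃ u, head e = some u ∧ reach u v₀ then 1 else 0)
    Submodule.span ℚ ((fun e => Pi.single e (1 : ℚ)) ''
        {e : E | tail e = none ∨ head e = none})
      ⊓ Submodule.span ℚ (Set.range ρ)
      = Submodule.span ℚ (Set.range ρC) :=
  OpenMultigraph.span_external_inf_span_relator ℚ

/-- For a finite directed multigraph with some external edges (edges with exactly one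
endpoint, encoded by `tail, head : E → Option V` with `none` meaning a free end), the
intersection of the span `V_e` of the external edge basis vectors with the span `V_c` of
the vertex relators `ρ(v)` is spanned by the component vectors `ρ(C)`, the signed sums of
external edges over each connected component. -/
theorem stmt_6 (V E : Type*) [Fintype V] [Fintype E]
    (tail head : E → Option V)
    (hext : ∀ e : E, ¬(tail e = none ∧ head e = none)) :
    -- the outgoing-minus-incoming relator of a vertex
    let ρ : V → (E → ℚ) := fun v e =>
      (if tail e = some v then 1 else 0) - (if head e = some v then 1 else 0)
    -- reachability via internal edges
    let reach : V → V → Prop := fun u v => Relation.ReflTransGen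
      (fun u v => ∃ e : E, (tail e = some u ∧ head e = some v) ∨
        (tail e = some v ∧ head e = some u)) u v
    -- the signed sum of external edges over the connected component of v₀:
    -- +1 for edges pointing out of the component, −1 for edges pointing into it
    let ρC : V → (E → ℚ) := fun v₀ e =>
      (if head e = none ∧ ∃ u, tail e = some u ∧ reach u v₀ then 1 else 0)
        - (if tail e = none ∧ ∃ u, head e = some u ∧ reach u v₀ then 1 else 0)
    Submodule.span ℚ ((fun e => Pi.single e (1 : ℚ)) ''
        {e : E | tail e = none ∨ head e = none})
      ⊓ Submodule.span ℚ (Set.range ρ)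
      = Submodule.span ℚ (Set.range ρC) :=
  stmt_6_general V E tail head
end

section
/- Let p ∈ ℚ[t] and write p(z) + p(x+y−z) − p(x) − p(y) = (z−x)(z−y)·G(x,y,z) in ℚ[x,y,z]. Then (x−y)·G(x,y,x) = p'(x) − p'(y). Equivalently, G(x,y,x) equals the (polynomial) divided difference of the derivative: G(x,y,x) = (p'(x) − p'(y))/(x−y). -/
/-!
Differentiate the identity with respect to `z` and then set `z = x`. On the left this gives
`p'(x) − p'(y)` by the chain rule. On the right the factor `z − x` vanishes at `z = x`, so only
the term where it is differentiated survives, leaving `(x − y)·G(x,y,x)`.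
-/

open MvPolynomial

namespace MvPolynomial

variable {R σ : Type*} [CommSemiring R]

theorem pderiv_polynomial_aeval (i : σ) (q : MvPolynomial σ R) (p : Polynomial R) :
    pderiv i (Polynomial.aeval q p) = Polynomial.aeval q (Polynomial.derivative p) * pderiv i q := by
  rw [Derivation.map_aeval, smul_eq_mul]

theorem aeval_pderiv_mul_of_aeval_eq_zero {S : Type*} [CommSemiring S] [Algebra R S]
    (i : σ) (v : σ → S) {f : MvPolynomial σ R} (hf : aeval v f = 0) (g : MvPolynomial σ R) :
    aeval v (pderiv i (f * g)) = aeval v (pderiv i f) * aeval v g := by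
  rw [Derivation.leibniz, map_add, smul_eq_mul, smul_eq_mul, map_mul, map_mul, hf, zero_mul,
    zero_add, mul_comm]

end MvPolynomial

/-- If `p(z) + p(x+y−z) − p(x) − p(y) = (z−x)(z−y)·G(x,y,z)` in `ℚ[x,y,z]`, then
`(x−y)·G(x,y,x) = p'(x) − p'(y)`, i.e. `G(x,y,x)` is the divided difference of `p'`. -/
theorem stmt_13 (p : Polynomial ℚ) (G : MvPolynomial (Fin 3) ℚ)
    (hG : Polynomial.aeval (X 2 : MvPolynomial (Fin 3) ℚ) p
        + Polynomial.aeval (X 0 + X 1 - X 2 : MvPolynomial (Fin 3) ℚ) p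
        - Polynomial.aeval (X 0 : MvPolynomial (Fin 3) ℚ) p
        - Polynomial.aeval (X 1 : MvPolynomial (Fin 3) ℚ) p
      = (X 2 - X 0) * (X 2 - X 1) * G) :
    (X 0 - X 1) * aeval ![X 0, X 1, X 0] G
      = Polynomial.aeval (X 0 : MvPolynomial (Fin 3) ℚ) (Polynomial.derivative p)
        - Polynomial.aeval (X 1 : MvPolynomial (Fin 3) ℚ) (Polynomial.derivative p) := by
  have hx : aeval ![(X 0 : MvPolynomial (Fin 3) ℚ), X 1, X 0]
      (X 2 - X 0 : MvPolynomial (Fin 3) ℚ) = 0 := by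
    simp
  have h := congrArg (fun q => aeval ![(X 0 : MvPolynomial (Fin 3) ℚ), X 1, X 0] (pderiv 2 q)) hG
  simp only [mul_assoc] at h
  rw [aeval_pderiv_mul_of_aeval_eq_zero 2 _ hx] at h
  simp only [map_add, map_sub, map_mul, map_one, map_zero, pderiv_polynomial_aeval,
    ← Polynomial.aeval_algHom_apply, pderiv_X_self, pderiv_X_of_ne (show (0 : Fin 3) ≠ 2 by decide),
    pderiv_X_of_ne (show (1 : Fin 3) ≠ 2 by decide), aeval_X, Matrix.cons_val_zero,
    Matrix.cons_val_one, Matrix.cons_val_two, Matrix.head_cons, Matrix.tail_cons,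
    add_sub_cancel_left] at h
  linear_combination -h
end
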